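/- arXiv:1904.11632 — 2 statements merged into one kernel-verified Lean document; each statement's English description precedes it below -/
import Mathlib

section
/- Under the product and union-bound uncertainty assumptions, let X(1:n), Y(1:n) satisfy the factorization conditions with 0 ≤ δ < (min over i, x(i) of m_𝒴(⟦Y(i)|x(i)⟧)) / (max over i of |⟦X(i)⟧|), and suppose either (X(1:n),Y(1:n)) is disassociated at (0, δⁿ) or associated at (1, δⁿ). Then the mutual information satisfies the superadditivity bound I_{δⁿ}(Y(1:n); X(1:n)) ≤ Σ_{i=1}^n I_δ(Y(i); X(i)); equivalently, |⟦Y(1:n)|X(1:n)⟧*_{δⁿ}| ≤ ∏_{i=1}^n |⟦Y(i)|X(i)⟧*_δ|. -/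
/-!
Send a member `S` of the joint overlap family to the tuple of members of the coordinate
families that contain the coordinates of some conditional range `⟦Y|x⟧ ⊆ S`; it suffices that
this assignment is injective. The bound on `δ` makes every product of coordinate sets that are
large relative to `δ` (in particular every joint conditional range) heavier than
`δⁿ m(⟦Y⟧)`, so it lies in at most one member of the joint family.

Under disassociation every nonempty overlap of two joint conditional ranges is heavier than
`δⁿ m(⟦Y⟧)`. The chains that `δ`-connect a coordinate member lift, one coordinate at a time, to
chains of overlapping joint conditional ranges, along which the joint member cannot change.

Under association two distinct values of one coordinate never have conditional ranges
overlapping by more than `δ` (completed by common other coordinates, they would give a joint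
overlap above `δⁿ`), so any two points of a coordinate member share a conditional range. As
distinct joint conditional ranges overlap by at most `δⁿ m(⟦Y⟧)` and there are at most
`∏ᵢ |⟦X(i)⟧|` of them, the union bound gives each `⟦Y|x⟧` a point outside all the others, and
this forces `⟦Y|x'⟧ ⊆ ⟦Y|x⟧` whenever `x` and `x'` have the same image.
-/

open Set Real

namespace NSIT

variable {Ω 𝒳 𝒴 : Type*}

/-- The conditional range `⟦X|y⟧` of an uncertain variable `X` given that the
uncertain variable `Y` takes the value `y`. -/
def condRange (X : Ω → 𝒳) (Y : Ω → 𝒴) (y : 𝒴) : Set 𝒳 :=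
  X '' {ω | Y ω = y}

/-- `m` is an uncertainty function: it vanishes on the empty set, is positive (and
finite, being real-valued) on nonempty sets, and is strongly transitive. -/
def IsUncertaintyFn (m : Set 𝒳 → ℝ) : Prop :=
  m ∅ = 0 ∧ (∀ S : Set 𝒳, S.Nonempty → 0 < m S) ∧
    ∀ S₁ S₂ : Set 𝒳, max (m S₁) (m S₂) ≤ m (S₁ ∪ S₂)

/-- The set of association `𝒜(X;Y)`: all nonzero relative uncertainties of
intersections of two distinct conditional ranges of `X` given values of `Y`. -/
def assocSet (mX : Set 𝒳 → ℝ) (X : Ω → 𝒳) (Y : Ω → 𝒴) : Set ℝ :=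
  {r | r ≠ 0 ∧ ∃ y₁ ∈ Set.range Y, ∃ y₂ ∈ Set.range Y, y₁ ≠ y₂ ∧
    r = mX (condRange X Y y₁ ∩ condRange X Y y₂) / mX (Set.range X)}

/-- `X` and `Y` are associated at levels `(δ₁, δ₂)`:
`𝒜(X;Y) ⪯ δ₁` and `𝒜(Y;X) ⪯ δ₂` (vacuously true for empty association sets). -/
def Associated (mX : Set 𝒳 → ℝ) (mY : Set 𝒴 → ℝ) (X : Ω → 𝒳) (Y : Ω → 𝒴)
    (δ₁ δ₂ : ℝ) : Prop :=
  (∀ r ∈ assocSet mX X Y, r ≤ δ₁) ∧ ∀ r ∈ assocSet mY Y X, r ≤ δ₂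

/-- `X` and `Y` are disassociated at levels `(δ₁, δ₂)`:
`𝒜(X;Y) ≻ δ₁` and `𝒜(Y;X) ≻ δ₂` (which in particular requires the association
sets to be nonempty). -/
def Disassociated (mX : Set 𝒳 → ℝ) (mY : Set 𝒴 → ℝ) (X : Ω → 𝒳) (Y : Ω → 𝒴)
    (δ₁ δ₂ : ℝ) : Prop :=
  (assocSet mX X Y).Nonempty ∧ (∀ r ∈ assocSet mX X Y, δ₁ < r) ∧
    (assocSet mY Y X).Nonempty ∧ ∀ r ∈ assocSet mY Y X, δ₂ < r

/-- `x₁` and `x₂` are `δ`-connected via `⟦X|Y⟧`: there is a finite chain of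
conditional ranges joining them whose consecutive intersections have relative
uncertainty greater than `δ`. -/
def Conn (mX : Set 𝒳 → ℝ) (X : Ω → 𝒳) (Y : Ω → 𝒴) (δ : ℝ) (x₁ x₂ : 𝒳) : Prop :=
  ∃ (N : ℕ) (ys : Fin (N + 1) → 𝒴),
    x₁ ∈ condRange X Y (ys 0) ∧ x₂ ∈ condRange X Y (ys (Fin.last N)) ∧
    ∀ i : Fin N,
      δ < mX (condRange X Y (ys i.succ) ∩ condRange X Y (ys i.castSucc)) /
        mX (Set.range X)

/-- `F` is a `δ`-overlap family (for `X` given `Y`): it covers `⟦X⟧`, each member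
is `δ`-connected and contains a singly `δ`-connected set of the form `⟦X|y⟧`,
any two distinct members overlap with uncertainty at most `δ · m(⟦X⟧)`, and every
conditional range `⟦X|y⟧` is contained in some member. -/
def IsOverlapFamily (mX : Set 𝒳 → ℝ) (X : Ω → 𝒳) (Y : Ω → 𝒴) (δ : ℝ)
    (F : Set (Set 𝒳)) : Prop :=
  ⋃₀ F = Set.range X ∧
  (∀ S ∈ F, (∀ x₁ ∈ S, ∀ x₂ ∈ S, Conn mX X Y δ x₁ x₂) ∧
    ∃ y ∈ Set.range Y, condRange X Y y ⊆ S) ∧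
  (∀ S₁ ∈ F, ∀ S₂ ∈ F, S₁ ≠ S₂ → mX (S₁ ∩ S₂) ≤ δ * mX (Set.range X)) ∧
  ∀ y ∈ Set.range Y, ∃ S ∈ F, condRange X Y y ⊆ S

end NSIT

lemma Relation.reflTransGen_of_fin_chain {α : Type*} {r : α → α → Prop} :
    ∀ {N : ℕ} (f : Fin (N + 1) → α), (∀ i : Fin N, r (f i.castSucc) (f i.succ)) →
      Relation.ReflTransGen r (f 0) (f (Fin.last N))
  | 0, _, _ => .refl
  | _ + 1, f, h =>
    (reflTransGen_of_fin_chain (fun i => f i.castSucc) fun i => h i.castSucc).tail (h (Fin.last _))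

lemma Relation.reflTransGen_pi_of_update {ι : Type*} [Fintype ι] [DecidableEq ι]
    {α : ι → Type*} {A : ∀ i, Set (α i)} {r : ∀ i, α i → α i → Prop}
    {R : (∀ i, α i) → (∀ i, α i) → Prop}
    (hR : ∀ v ∈ Set.univ.pi A, ∀ i x y, r i x y →
      R (Function.update v i x) (Function.update v i y))
    {a b : ∀ i, α i} (ha : a ∈ Set.univ.pi A) (hb : b ∈ Set.univ.pi A)
    (h : ∀ i, ReflTransGen (r i) (a i) (b i)) : ReflTransGen R a b := by
  suffices ∀ s : Finset ι, ReflTransGen R a (s.piecewise b a) by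
    simpa using this Finset.univ
  intro s
  induction s using Finset.induction_on with
  | empty => exact Finset.piecewise_empty b a ▸ .refl
  | insert i s hi ih =>
    have hv : s.piecewise b a ∈ Set.univ.pi A := Finset.piecewise_mem_set_pi _ hb ha
    refine ih.trans ?_
    rw [Finset.piecewise_insert]
    nth_rewrite 1 [← Function.update_eq_self i (s.piecewise b a),
      Finset.piecewise_eq_of_notMem _ _ _ hi]
    exact (h i).lift _ fun x y hxy => hR _ hv i x y hxy

lemma Set.ncard_univ_pi {ι : Type*} [Fintype ι] {α : ι → Type*} (s : ∀ i, Set (α i)) :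
    (Set.univ.pi s).ncard = ∏ i, (s i).ncard := by
  simp [Set.ncard_def, ENat.toNat_prod]

lemma Set.ncard_le_ncard_of_forall_subsingleton {α β : Type*} {s : Set α} {t : Set β}
    (r : α → β → Prop) (hs : ∀ a ∈ s, ∃ b ∈ t, r a b)
    (ht : ∀ b ∈ t, {a ∈ s | r a b}.Subsingleton) (htf : t.Finite) : s.ncard ≤ t.ncard := by
  rcases s.eq_empty_or_nonempty with rfl | ⟨a, ha⟩
  · simp
  have : Nonempty β := ⟨(hs a ha).choose⟩
  choose! f hft hfr using hs
  exact Set.ncard_le_ncard_of_injOn f hft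
    (fun a ha a' ha' h => ht _ (hft a ha) ⟨ha, hfr a ha⟩ ⟨ha', h ▸ hfr a' ha'⟩) htf

lemma Finset.prod_lt_prod_of_nonempty_of_nonneg {ι R : Type*} [CommSemiring R] [PartialOrder R]
    [IsStrictOrderedRing R] {s : Finset ι} {f g : ι → R} (hf : ∀ i ∈ s, 0 ≤ f i)
    (hfg : ∀ i ∈ s, f i < g i) (hs : s.Nonempty) : ∏ i ∈ s, f i < ∏ i ∈ s, g i := by
  induction hs using Finset.Nonempty.cons_induction with
  | singleton a => simpa using hfg a (Finset.mem_singleton_self a)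
  | cons a s ha hs ih =>
    simp only [Finset.prod_cons, Finset.forall_mem_cons] at hf hfg ⊢
    exact mul_lt_mul'' hfg.1 (ih hf.2 hfg.2) hf.1 (Finset.prod_nonneg hf.2)

lemma Real.logb_natCast_le_sum_of_le_prod {ι : Type*} {c : ℝ} (hc : 1 < c) (s : Finset ι)
    {a : ℕ} {b : ι → ℕ} (h : a ≤ ∏ i ∈ s, b i) : logb c a ≤ ∑ i ∈ s, logb c (b i) := by
  rcases Nat.eq_zero_or_pos a with rfl | ha
  · rw [Nat.cast_zero, logb_zero]
    exact Finset.sum_nonneg fun i _ => div_nonneg (log_natCast_nonneg (b i)) (log_nonneg hc.le)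
  have hb : ∀ i ∈ s, (b i : ℝ) ≠ 0 := fun i hi =>
    Nat.cast_ne_zero.2 (Finset.prod_ne_zero_iff.1 (ha.trans_le h).ne' i hi)
  rw [← logb_prod _ _ hb, ← Nat.cast_prod]
  exact logb_le_logb_of_le hc (by exact_mod_cast ha) (by exact_mod_cast h)

namespace NSIT

variable {Ω 𝒳 𝒴 : Type*}

namespace IsUncertaintyFn

variable {α : Type*} {m : Set α → ℝ}

lemma mono (hm : IsUncertaintyFn m) {A B : Set α} (h : A ⊆ B) : m A ≤ m B := by
  simpa [Set.union_eq_self_of_subset_left h] using (le_max_left _ _).trans (hm.2.2 A B)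

lemma nonneg (hm : IsUncertaintyFn m) (A : Set α) : 0 ≤ m A :=
  hm.1 ▸ hm.mono (Set.empty_subset A)

lemma nonempty_of_ne_zero (hm : IsUncertaintyFn m) {A : Set α} (h : m A ≠ 0) : A.Nonempty :=
  Set.nonempty_iff_ne_empty.2 fun hA => h (hA ▸ hm.1)

end IsUncertaintyFn

lemma condRange_nonempty_iff {X : Ω → 𝒳} {Y : Ω → 𝒴} {y : 𝒴} :
    (condRange X Y y).Nonempty ↔ y ∈ Set.range Y := by
  simp [condRange, Set.Nonempty, Set.range]

/-- Two values of `Y` are joined by one step of a `δ`-connecting chain (`Conn`). -/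
def Overlapping (mX : Set 𝒳 → ℝ) (X : Ω → 𝒳) (Y : Ω → 𝒴) (δ : ℝ) (y y' : 𝒴) : Prop :=
  δ < mX (condRange X Y y ∩ condRange X Y y') / mX (Set.range X)

section Overlap

variable {mX : Set 𝒳 → ℝ} {X : Ω → 𝒳} {Y : Ω → 𝒴} {δ : ℝ}

lemma Conn.exists_reflTransGen {x₁ x₂ : 𝒳} (h : Conn mX X Y δ x₁ x₂) :
    ∃ y₁ y₂, x₁ ∈ condRange X Y y₁ ∧ x₂ ∈ condRange X Y y₂ ∧
      Relation.ReflTransGen (Overlapping mX X Y δ) y₁ y₂ := by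
  obtain ⟨N, ys, h₁, h₂, hstep⟩ := h
  refine ⟨_, _, h₁, h₂, Relation.reflTransGen_of_fin_chain ys fun i => ?_⟩
  rw [Overlapping, Set.inter_comm]
  exact hstep i

lemma Overlapping.inter_nonempty (hm : IsUncertaintyFn mX) (hδ : 0 ≤ δ) {y y' : 𝒴}
    (h : Overlapping mX X Y δ y y') : (condRange X Y y ∩ condRange X Y y').Nonempty :=
  hm.nonempty_of_ne_zero fun h0 => by
    rw [Overlapping, h0, zero_div] at h
    linarith

namespace IsOverlapFamily

variable {F : Set (Set 𝒳)}

lemma eq_of_subset (hF : IsOverlapFamily mX X Y δ F) (hm : IsUncertaintyFn mX) {S S' R : Set 𝒳}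
    (hS : S ∈ F) (hS' : S' ∈ F) (hR : δ * mX (Set.range X) < mX R) (hRS : R ⊆ S)
    (hRS' : R ⊆ S') : S = S' := by
  by_contra hne
  have := hm.mono (Set.subset_inter hRS hRS')
  linarith [hF.2.2.1 S hS S' hS' hne]

lemma eq_of_reflTransGen (hF : IsOverlapFamily mX X Y δ F) (hm : IsUncertaintyFn mX)
    (hlarge : ∀ y y', (condRange X Y y ∩ condRange X Y y').Nonempty →
      δ * mX (Set.range X) < mX (condRange X Y y ∩ condRange X Y y'))
    {y₁ y₂ : 𝒴} (hy₁ : y₁ ∈ Set.range Y)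
    (h : Relation.ReflTransGen (fun y y' => (condRange X Y y ∩ condRange X Y y').Nonempty) y₁ y₂)
    {S S' : Set 𝒳} (hS : S ∈ F) (hS' : S' ∈ F) (h₁ : condRange X Y y₁ ⊆ S)
    (h₂ : condRange X Y y₂ ⊆ S') : S = S' := by
  induction h generalizing S' with
  | refl =>
    have hne : (condRange X Y y₁).Nonempty := condRange_nonempty_iff.2 hy₁
    refine hF.eq_of_subset hm hS hS' (R := condRange X Y y₁) ?_ h₁ h₂
    simpa using hlarge y₁ y₁ (by simpa using hne)
  | tail _ hbc ih =>
    obtain ⟨U, hU, hbU⟩ := hF.2.2.2 _ (condRange_nonempty_iff.1 (hbc.mono Set.inter_subset_left))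
    exact (ih hU hbU).trans (hF.eq_of_subset hm hU hS' (hlarge _ _ hbc)
      (Set.inter_subset_left.trans hbU) (Set.inter_subset_right.trans h₂))

lemma reflTransGen_of_subset (hF : IsOverlapFamily mX X Y δ F) (hm : IsUncertaintyFn mX)
    (hδ : 0 ≤ δ) {T : Set 𝒳} (hT : T ∈ F) {y y' : 𝒴} (hy : y ∈ Set.range Y)
    (hy' : y' ∈ Set.range Y) (hyT : condRange X Y y ⊆ T) (hy'T : condRange X Y y' ⊆ T) :
    Relation.ReflTransGen (fun y y' => (condRange X Y y ∩ condRange X Y y').Nonempty) y y' := by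
  obtain ⟨p, hp⟩ := condRange_nonempty_iff.2 hy
  obtain ⟨q, hq⟩ := condRange_nonempty_iff.2 hy'
  obtain ⟨y₁, y₂, hp₁, hq₂, h⟩ := ((hF.2.1 T hT).1 p (hyT hp) q (hy'T hq)).exists_reflTransGen
  have h' := Relation.ReflTransGen.mono (fun _ _ h => Overlapping.inter_nonempty hm hδ h) _ _ h
  exact .head ⟨p, hp, hp₁⟩ (h'.tail ⟨q, hq₂, hq⟩)

lemma exists_mem_condRange_of_mem (hF : IsOverlapFamily mX X Y δ F)
    (hr : ∀ y y', Overlapping mX X Y δ y y' → y = y') {T : Set 𝒳} (hT : T ∈ F) {p q : 𝒳}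
    (hp : p ∈ T) (hq : q ∈ T) : ∃ y, p ∈ condRange X Y y ∧ q ∈ condRange X Y y := by
  obtain ⟨y₁, y₂, hp₁, hq₂, h⟩ := ((hF.2.1 T hT).1 p hp q hq).exists_reflTransGen
  have h₁₂ : y₁ = y₂ := by
    simpa [Relation.reflTransGen_eq_self] using Relation.ReflTransGen.mono hr _ _ h
  exact ⟨y₁, hp₁, h₁₂ ▸ hq₂⟩

end IsOverlapFamily

end Overlap

section Association

variable {mY : Set 𝒴 → ℝ} {Y : Ω → 𝒴} {X : Ω → 𝒳} {δ : ℝ}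

lemma inter_le_of_forall_assocSet_le (hA : ∀ r ∈ assocSet mY Y X, r ≤ δ)
    (hpos : 0 < mY (Set.range Y)) (hδ : 0 ≤ δ) {x x' : 𝒳} (hx : x ∈ Set.range X)
    (hx' : x' ∈ Set.range X) (hne : x ≠ x') :
    mY (condRange Y X x ∩ condRange Y X x') ≤ δ * mY (Set.range Y) := by
  by_cases h0 : mY (condRange Y X x ∩ condRange Y X x') / mY (Set.range Y) = 0
  · rw [(div_eq_zero_iff.1 h0).resolve_right hpos.ne']
    positivity
  · exact (div_le_iff₀ hpos).1 (hA _ ⟨h0, x, hx, x', hx', hne, rfl⟩)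

lemma lt_inter_of_forall_lt_assocSet (hD : ∀ r ∈ assocSet mY Y X, δ < r)
    (hm : IsUncertaintyFn mY) (hpos : 0 < mY (Set.range Y)) {x x' : 𝒳} (hx : x ∈ Set.range X)
    (hx' : x' ∈ Set.range X) (hne : x ≠ x') (hI : (condRange Y X x ∩ condRange Y X x').Nonempty) :
    δ * mY (Set.range Y) < mY (condRange Y X x ∩ condRange Y X x') :=
  (lt_div_iff₀ hpos).1 (hD _ ⟨(div_pos (hm.2.1 _ hI) hpos).ne', x, hx, x', hx', hne, rfl⟩)

lemma exists_mem_condRange_forall_notMem (hm : IsUncertaintyFn mY)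
    (hsub : ∀ A B : Set 𝒴, mY (A ∪ B) ≤ mY A + mY B) (hfin : (Set.range X).Finite) {θ : ℝ}
    (hθ : 0 ≤ θ) {x : 𝒳}
    (hsmall : ∀ x' ∈ Set.range X, x' ≠ x → mY (condRange Y X x ∩ condRange Y X x') ≤ θ)
    (hbig : (Set.range X).ncard * θ < mY (condRange Y X x)) :
    ∃ y ∈ condRange Y X x, ∀ x' ∈ Set.range X, x' ≠ x → y ∉ condRange Y X x' := by
  classical
  by_contra! hcov
  have hsubset : condRange Y X x ⊆
      ⋃ x' ∈ hfin.toFinset.erase x, condRange Y X x ∩ condRange Y X x' := by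
    intro y hy
    obtain ⟨x', hx', hne, hyx'⟩ := hcov y hy
    exact Set.mem_biUnion (Finset.mem_erase.2 ⟨hne, hfin.mem_toFinset.2 hx'⟩) ⟨hy, hyx'⟩
  have hcard : ((hfin.toFinset.erase x).card : ℝ) ≤ (Set.range X).ncard := by
    rw [Set.ncard_eq_toFinset_card _ hfin]
    exact_mod_cast Finset.card_erase_le
  have := calc mY (condRange Y X x)
      ≤ ∑ x' ∈ hfin.toFinset.erase x, mY (condRange Y X x ∩ condRange Y X x') :=
        (hm.mono hsubset).trans (Finset.apply_union_le_sum hm.1 (hsub _ _) _)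
    _ ≤ (hfin.toFinset.erase x).card * θ := by
        simpa using Finset.sum_le_sum fun x' hx' =>
          hsmall x' (hfin.mem_toFinset.1 (Finset.mem_of_mem_erase hx')) (Finset.ne_of_mem_erase hx')
    _ ≤ (Set.range X).ncard * θ := mul_le_mul_of_nonneg_right hcard hθ
  linarith

end Association

structure IsFactorized {n : ℕ} (Xv : Ω → Fin n → 𝒳) (Yv : Ω → Fin n → 𝒴) : Prop where
  range_eq : Set.range Xv = Set.univ.pi fun i => Set.range fun ω => Xv ω i
  condRange_eq : ∀ xv ∈ Set.range Xv, condRange Yv Xv xv =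
    Set.univ.pi fun i => condRange (fun ω => Yv ω i) (fun ω => Xv ω i) (xv i)

section Factorized

variable {n : ℕ} {m1 : Set 𝒴 → ℝ} {mn : Set (Fin n → 𝒴) → ℝ} {Xv : Ω → Fin n → 𝒳}
  {Yv : Ω → Fin n → 𝒴} {δ : ℝ}

namespace IsFactorized

lemma apply_mem_range (hXY : IsFactorized Xv Yv) {xv : Fin n → 𝒳} (hxv : xv ∈ Set.range Xv)
    (i : Fin n) : xv i ∈ Set.range fun ω => Xv ω i :=
  (hXY.range_eq ▸ hxv) i trivial

lemma update_mem_range (hXY : IsFactorized Xv Yv) {v : Fin n → 𝒳} (hv : v ∈ Set.range Xv)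
    {i : Fin n} {x : 𝒳} (hx : x ∈ Set.range fun ω => Xv ω i) :
    Function.update v i x ∈ Set.range Xv := by
  rw [hXY.range_eq]
  intro j _
  rcases eq_or_ne j i with rfl | hj
  · simpa using hx
  · simpa [hj] using hXY.apply_mem_range hv j

lemma condRange_update_inter (hXY : IsFactorized Xv Yv) {v : Fin n → 𝒳} (hv : v ∈ Set.range Xv)
    {i : Fin n} {x y : 𝒳} (hx : x ∈ Set.range fun ω => Xv ω i)
    (hy : y ∈ Set.range fun ω => Xv ω i) :
    condRange Yv Xv (Function.update v i x) ∩ condRange Yv Xv (Function.update v i y) =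
      Set.univ.pi (Function.update (fun j => condRange (fun ω => Yv ω j) (fun ω => Xv ω j) (v j))
        i (condRange (fun ω => Yv ω i) (fun ω => Xv ω i) x ∩
          condRange (fun ω => Yv ω i) (fun ω => Xv ω i) y)) := by
  rw [hXY.condRange_eq _ (hXY.update_mem_range hv hx),
    hXY.condRange_eq _ (hXY.update_mem_range hv hy), ← Set.pi_inter_distrib]
  congr 1
  funext j
  rcases eq_or_ne j i with rfl | hj
  · simp
  · simp [hj]

end IsFactorized

lemma m1_le_one (hn : n ≠ 0) (hm1 : IsUncertaintyFn m1)
    (hprod : ∀ S : Fin n → Set 𝒴, mn (Set.univ.pi S) = ∏ i, m1 (S i))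
    (hmnuniv : mn Set.univ = 1) (S : Set 𝒴) : m1 S ≤ 1 := by
  have h : m1 Set.univ ^ n = 1 := by simpa [hmnuniv] using (hprod fun _ => Set.univ).symm
  rw [pow_eq_one_iff_of_nonneg (hm1.nonneg _) hn] at h
  exact h ▸ hm1.mono (Set.subset_univ S)

lemma lt_mn_pi (hn : n ≠ 0) (hm1 : IsUncertaintyFn m1) (hmn : IsUncertaintyFn mn)
    (hprod : ∀ S : Fin n → Set 𝒴, mn (Set.univ.pi S) = ∏ i, m1 (S i)) (hδ0 : 0 ≤ δ)
    {A : Fin n → Set 𝒴} (hA : ∀ j, δ * m1 (Set.range fun ω => Yv ω j) < m1 (A j)) :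
    δ ^ n * mn (Set.range Yv) < mn (Set.univ.pi A) := by
  have hrange : Set.range Yv ⊆ Set.univ.pi fun j => Set.range fun ω => Yv ω j := by
    rintro _ ⟨ω, rfl⟩ j -
    exact ⟨ω, rfl⟩
  have : NeZero n := ⟨hn⟩
  calc δ ^ n * mn (Set.range Yv)
      ≤ δ ^ n * ∏ j, m1 (Set.range fun ω => Yv ω j) :=
        mul_le_mul_of_nonneg_left ((hmn.mono hrange).trans (hprod _).le) (by positivity)
    _ = ∏ j, δ * m1 (Set.range fun ω => Yv ω j) := by simp [Finset.prod_mul_distrib]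
    _ < ∏ j, m1 (A j) :=
        Finset.prod_lt_prod_of_nonempty_of_nonneg (fun j _ => mul_nonneg hδ0 (hm1.nonneg _))
          (fun j _ => hA j) Finset.univ_nonempty
    _ = mn (Set.univ.pi A) := (hprod A).symm

lemma lt_m1_condRange (hn : n ≠ 0) (hm1 : IsUncertaintyFn m1)
    (hprod : ∀ S : Fin n → Set 𝒴, mn (Set.univ.pi S) = ∏ i, m1 (S i))
    (hmnuniv : mn Set.univ = 1) {i : Fin n} (hXfin : (Set.range fun ω => Xv ω i).Finite)
    (hδ0 : 0 ≤ δ) {x : 𝒳} (hx : x ∈ Set.range fun ω => Xv ω i)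
    (hlarge : δ * (Set.range fun ω => Xv ω i).ncard <
      m1 (condRange (fun ω => Yv ω i) (fun ω => Xv ω i) x)) :
    δ * m1 (Set.range fun ω => Yv ω i) <
      m1 (condRange (fun ω => Yv ω i) (fun ω => Xv ω i) x) := by
  have hcard : (1 : ℝ) ≤ (Set.range fun ω => Xv ω i).ncard := by
    exact_mod_cast (Set.ncard_pos hXfin).2 ⟨x, hx⟩
  refine lt_of_le_of_lt (mul_le_mul_of_nonneg_left ?_ hδ0) hlarge
  exact (m1_le_one hn hm1 hprod hmnuniv _).trans hcard

lemma lt_mn_condRange (hn : n ≠ 0) (hm1 : IsUncertaintyFn m1) (hmn : IsUncertaintyFn mn)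
    (hprod : ∀ S : Fin n → Set 𝒴, mn (Set.univ.pi S) = ∏ i, m1 (S i))
    (hmnuniv : mn Set.univ = 1) (hXY : IsFactorized Xv Yv)
    (hXfin : ∀ i, (Set.range fun ω => Xv ω i).Finite) (hδ0 : 0 ≤ δ)
    (hlarge : ∀ i, ∀ x ∈ Set.range fun ω => Xv ω i, δ * (Set.range fun ω => Xv ω i).ncard <
      m1 (condRange (fun ω => Yv ω i) (fun ω => Xv ω i) x))
    {xv : Fin n → 𝒳} (hxv : xv ∈ Set.range Xv) :
    δ ^ n * mn (Set.range Yv) < mn (condRange Yv Xv xv) := by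
  have hxi := hXY.apply_mem_range hxv
  rw [hXY.condRange_eq xv hxv]
  exact lt_mn_pi hn hm1 hmn hprod hδ0 fun i =>
    lt_m1_condRange hn hm1 hprod hmnuniv (hXfin i) hδ0 (hxi i) (hlarge i _ (hxi i))

lemma ncard_mul_lt_mn_condRange (hn : n ≠ 0) (hmn : IsUncertaintyFn mn)
    (hprod : ∀ S : Fin n → Set 𝒴, mn (Set.univ.pi S) = ∏ i, m1 (S i))
    (hmnuniv : mn Set.univ = 1) (hXY : IsFactorized Xv Yv) (hδ0 : 0 ≤ δ)
    (hlarge : ∀ i, ∀ x ∈ Set.range fun ω => Xv ω i, δ * (Set.range fun ω => Xv ω i).ncard <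
      m1 (condRange (fun ω => Yv ω i) (fun ω => Xv ω i) x))
    {xv : Fin n → 𝒳} (hxv : xv ∈ Set.range Xv) :
    (Set.range Xv).ncard * (δ ^ n * mn (Set.range Yv)) < mn (condRange Yv Xv xv) := by
  have hmnY : mn (Set.range Yv) ≤ 1 := hmnuniv ▸ hmn.mono (Set.subset_univ _)
  have : NeZero n := ⟨hn⟩
  calc ((Set.range Xv).ncard : ℝ) * (δ ^ n * mn (Set.range Yv))
      ≤ (∏ i, ((Set.range fun ω => Xv ω i).ncard : ℝ)) * δ ^ n := by
        rw [hXY.range_eq, Set.ncard_univ_pi, Nat.cast_prod]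
        exact mul_le_mul_of_nonneg_left (mul_le_of_le_one_right (pow_nonneg hδ0 n) hmnY)
          (by positivity)
    _ = ∏ i, δ * (Set.range fun ω => Xv ω i).ncard := by
        simp [Finset.prod_mul_distrib, mul_comm]
    _ < ∏ i, m1 (condRange (fun ω => Yv ω i) (fun ω => Xv ω i) (xv i)) :=
        Finset.prod_lt_prod_of_nonempty_of_nonneg (fun i _ => mul_nonneg hδ0 (Nat.cast_nonneg _))
          (fun i _ => hlarge i _ (hXY.apply_mem_range hxv i)) Finset.univ_nonempty
    _ = mn (condRange Yv Xv xv) := by rw [hXY.condRange_eq xv hxv, hprod]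

/-- Completing two overlapping values of one coordinate by the same values of the other
coordinates gives two joint conditional ranges overlapping by more than `δⁿ m(⟦Y⟧)`, which
association forbids. -/
lemma eq_of_overlapping_of_associated (hn : n ≠ 0) (hm1 : IsUncertaintyFn m1)
    (hmn : IsUncertaintyFn mn)
    (hprod : ∀ S : Fin n → Set 𝒴, mn (Set.univ.pi S) = ∏ i, m1 (S i))
    (hmnuniv : mn Set.univ = 1) (hXY : IsFactorized Xv Yv)
    (hXfin : ∀ i, (Set.range fun ω => Xv ω i).Finite) (hδ0 : 0 ≤ δ)
    (hlarge : ∀ i, ∀ x ∈ Set.range fun ω => Xv ω i, δ * (Set.range fun ω => Xv ω i).ncard <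
      m1 (condRange (fun ω => Yv ω i) (fun ω => Xv ω i) x))
    (hA : ∀ r ∈ assocSet mn Yv Xv, r ≤ δ ^ n) {i : Fin n} {x y : 𝒳}
    (h : Overlapping m1 (fun ω => Yv ω i) (fun ω => Xv ω i) δ x y) : x = y := by
  by_contra hne
  obtain ⟨p, hpx, hpy⟩ := h.inter_nonempty hm1 hδ0
  have hx := condRange_nonempty_iff.1 ⟨p, hpx⟩
  have hy := condRange_nonempty_iff.1 ⟨p, hpy⟩
  obtain ⟨ω, -⟩ := id hx
  have hv : Xv ω ∈ Set.range Xv := ⟨ω, rfl⟩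
  have hbig : δ ^ n * mn (Set.range Yv) < mn (condRange Yv Xv (Function.update (Xv ω) i x) ∩
      condRange Yv Xv (Function.update (Xv ω) i y)) := by
    rw [hXY.condRange_update_inter hv hx hy]
    refine lt_mn_pi hn hm1 hmn hprod hδ0 fun j => ?_
    rcases eq_or_ne j i with rfl | hj
    · have hpos : 0 < m1 (Set.range fun ω => Yv ω j) := hm1.2.1 _ ⟨_, ω, rfl⟩
      simpa using (lt_div_iff₀ hpos).1 h
    · simpa [hj] using
        lt_m1_condRange hn hm1 hprod hmnuniv (hXfin j) hδ0 ⟨ω, rfl⟩ (hlarge j _ ⟨ω, rfl⟩)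
  have hsmall := inter_le_of_forall_assocSet_le hA (hmn.2.1 _ ⟨_, ω, rfl⟩) (pow_nonneg hδ0 n)
    (hXY.update_mem_range hv hx) (hXY.update_mem_range hv hy)
    fun h => hne (by simpa using congrFun h i)
  linarith

lemma condRange_subset_of_associated (hn : n ≠ 0) (hm1 : IsUncertaintyFn m1)
    (hmn : IsUncertaintyFn mn)
    (hprod : ∀ S : Fin n → Set 𝒴, mn (Set.univ.pi S) = ∏ i, m1 (S i))
    (hmnuniv : mn Set.univ = 1)
    (hsubn : ∀ S₁ S₂ : Set (Fin n → 𝒴), mn (S₁ ∪ S₂) ≤ mn S₁ + mn S₂)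
    (hXY : IsFactorized Xv Yv) (hXfin : ∀ i, (Set.range fun ω => Xv ω i).Finite) (hδ0 : 0 ≤ δ)
    (hlarge : ∀ i, ∀ x ∈ Set.range fun ω => Xv ω i, δ * (Set.range fun ω => Xv ω i).ncard <
      m1 (condRange (fun ω => Yv ω i) (fun ω => Xv ω i) x))
    (hA : ∀ r ∈ assocSet mn Yv Xv, r ≤ δ ^ n) {F : Fin n → Set (Set 𝒴)}
    (hF : ∀ i, IsOverlapFamily m1 (fun ω => Yv ω i) (fun ω => Xv ω i) δ (F i))
    {xv xv' : Fin n → 𝒳} (hxv : xv ∈ Set.range Xv) (hxv' : xv' ∈ Set.range Xv)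
    {t : Fin n → Set 𝒴} (ht : ∀ i, t i ∈ F i)
    (hxt : ∀ i, condRange (fun ω => Yv ω i) (fun ω => Xv ω i) (xv i) ⊆ t i)
    (hxt' : ∀ i, condRange (fun ω => Yv ω i) (fun ω => Xv ω i) (xv' i) ⊆ t i) :
    condRange Yv Xv xv' ⊆ condRange Yv Xv xv := by
  have hpos : 0 < mn (Set.range Yv) := by
    obtain ⟨ω, -⟩ := hxv
    exact hmn.2.1 _ ⟨_, ω, rfl⟩
  obtain ⟨p, hp, hpriv⟩ := exists_mem_condRange_forall_notMem hmn hsubn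
    (hXY.range_eq ▸ Set.Finite.pi hXfin) (mul_nonneg (pow_nonneg hδ0 n) hpos.le)
    (fun x' hx' hne => inter_le_of_forall_assocSet_le hA hpos (pow_nonneg hδ0 n) hxv hx' hne.symm)
    (ncard_mul_lt_mn_condRange hn hmn hprod hmnuniv hXY hδ0 hlarge hxv)
  intro q hq
  rw [hXY.condRange_eq xv hxv] at hp ⊢
  rw [hXY.condRange_eq xv' hxv'] at hq
  have hshare : ∀ i, ∃ c, p i ∈ condRange (fun ω => Yv ω i) (fun ω => Xv ω i) c ∧
      q i ∈ condRange (fun ω => Yv ω i) (fun ω => Xv ω i) c := fun i =>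
    (hF i).exists_mem_condRange_of_mem
      (fun _ _ => eq_of_overlapping_of_associated hn hm1 hmn hprod hmnuniv hXY hXfin hδ0 hlarge hA)
      (ht i) (hxt i (hp i trivial)) (hxt' i (hq i trivial))
  choose c hpc hqc using hshare
  have hc : c ∈ Set.range Xv := hXY.range_eq ▸ fun i _ => condRange_nonempty_iff.1 ⟨_, hpc i⟩
  obtain rfl : c = xv := by
    by_contra hne
    exact hpriv c hc hne (hXY.condRange_eq c hc ▸ fun i _ => hpc i)
  exact fun i _ => hqc i

lemma eq_of_disassociated (hn : n ≠ 0) (hm1 : IsUncertaintyFn m1) (hmn : IsUncertaintyFn mn)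
    (hprod : ∀ S : Fin n → Set 𝒴, mn (Set.univ.pi S) = ∏ i, m1 (S i))
    (hmnuniv : mn Set.univ = 1) (hXY : IsFactorized Xv Yv)
    (hXfin : ∀ i, (Set.range fun ω => Xv ω i).Finite) (hδ0 : 0 ≤ δ)
    (hlarge : ∀ i, ∀ x ∈ Set.range fun ω => Xv ω i, δ * (Set.range fun ω => Xv ω i).ncard <
      m1 (condRange (fun ω => Yv ω i) (fun ω => Xv ω i) x))
    (hD : ∀ r ∈ assocSet mn Yv Xv, δ ^ n < r) {Fn : Set (Set (Fin n → 𝒴))}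
    (hFn : IsOverlapFamily mn Yv Xv (δ ^ n) Fn) {F : Fin n → Set (Set 𝒴)}
    (hF : ∀ i, IsOverlapFamily m1 (fun ω => Yv ω i) (fun ω => Xv ω i) δ (F i))
    {S S' : Set (Fin n → 𝒴)} (hS : S ∈ Fn) (hS' : S' ∈ Fn)
    {xv xv' : Fin n → 𝒳} (hxv : xv ∈ Set.range Xv) (hxv' : xv' ∈ Set.range Xv)
    (hxS : condRange Yv Xv xv ⊆ S) (hxS' : condRange Yv Xv xv' ⊆ S')
    {t : Fin n → Set 𝒴} (ht : ∀ i, t i ∈ F i)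
    (hxt : ∀ i, condRange (fun ω => Yv ω i) (fun ω => Xv ω i) (xv i) ⊆ t i)
    (hxt' : ∀ i, condRange (fun ω => Yv ω i) (fun ω => Xv ω i) (xv' i) ⊆ t i) : S = S' := by
  have hpos : 0 < mn (Set.range Yv) := by
    obtain ⟨ω, -⟩ := hxv
    exact hmn.2.1 _ ⟨_, ω, rfl⟩
  have hchain : Relation.ReflTransGen
      (fun a b => (condRange Yv Xv a ∩ condRange Yv Xv b).Nonempty) xv xv' := by
    refine Relation.reflTransGen_pi_of_update (A := fun i => Set.range fun ω => Xv ω i)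
      (r := fun i x y => (condRange (fun ω => Yv ω i) (fun ω => Xv ω i) x ∩
        condRange (fun ω => Yv ω i) (fun ω => Xv ω i) y).Nonempty)
      (fun v hv i x y hxy => ?_) (hXY.range_eq ▸ hxv) (hXY.range_eq ▸ hxv') fun i =>
        (hF i).reflTransGen_of_subset hm1 hδ0 (ht i) (hXY.apply_mem_range hxv i)
          (hXY.apply_mem_range hxv' i) (hxt i) (hxt' i)
    have hv' : v ∈ Set.range Xv := hXY.range_eq ▸ hv
    rw [hXY.condRange_update_inter hv'
      (condRange_nonempty_iff.1 (hxy.mono Set.inter_subset_left))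
      (condRange_nonempty_iff.1 (hxy.mono Set.inter_subset_right)), Set.univ_pi_nonempty_iff]
    intro j
    rcases eq_or_ne j i with rfl | hj
    · simpa using hxy
    · simpa [hj] using condRange_nonempty_iff.2 (hXY.apply_mem_range hv' j)
  refine hFn.eq_of_reflTransGen hmn (fun a b hab => ?_) hxv hchain hS hS' hxS hxS'
  have ha := condRange_nonempty_iff.1 (hab.mono Set.inter_subset_left)
  have hb := condRange_nonempty_iff.1 (hab.mono Set.inter_subset_right)
  rcases eq_or_ne a b with rfl | hne
  · rw [Set.inter_self]
    exact lt_mn_condRange hn hm1 hmn hprod hmnuniv hXY hXfin hδ0 hlarge ha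
  · exact lt_inter_of_forall_lt_assocSet hD hmn hpos ha hb hne hab

lemma eq_of_condRange_subset (hm1 : IsUncertaintyFn m1) (hmn : IsUncertaintyFn mn)
    (hprod : ∀ S : Fin n → Set 𝒴, mn (Set.univ.pi S) = ∏ i, m1 (S i))
    (hmnuniv : mn Set.univ = 1)
    (hsubn : ∀ S₁ S₂ : Set (Fin n → 𝒴), mn (S₁ ∪ S₂) ≤ mn S₁ + mn S₂)
    (hXY : IsFactorized Xv Yv) (hXfin : ∀ i, (Set.range fun ω => Xv ω i).Finite) (hδ0 : 0 ≤ δ)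
    (hlarge : ∀ i, ∀ x ∈ Set.range fun ω => Xv ω i, δ * (Set.range fun ω => Xv ω i).ncard <
      m1 (condRange (fun ω => Yv ω i) (fun ω => Xv ω i) x))
    {mXn : Set (Fin n → 𝒳) → ℝ}
    (hdich : Disassociated mXn mn Xv Yv 0 (δ ^ n) ∨ Associated mXn mn Xv Yv 1 (δ ^ n))
    {Fn : Set (Set (Fin n → 𝒴))} (hFn : IsOverlapFamily mn Yv Xv (δ ^ n) Fn)
    {F : Fin n → Set (Set 𝒴)}
    (hF : ∀ i, IsOverlapFamily m1 (fun ω => Yv ω i) (fun ω => Xv ω i) δ (F i))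
    {S S' : Set (Fin n → 𝒴)} (hS : S ∈ Fn) (hS' : S' ∈ Fn)
    {xv xv' : Fin n → 𝒳} (hxv : xv ∈ Set.range Xv) (hxv' : xv' ∈ Set.range Xv)
    (hxS : condRange Yv Xv xv ⊆ S) (hxS' : condRange Yv Xv xv' ⊆ S')
    {t : Fin n → Set 𝒴} (ht : ∀ i, t i ∈ F i)
    (hxt : ∀ i, condRange (fun ω => Yv ω i) (fun ω => Xv ω i) (xv i) ⊆ t i)
    (hxt' : ∀ i, condRange (fun ω => Yv ω i) (fun ω => Xv ω i) (xv' i) ⊆ t i) : S = S' := by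
  rcases eq_or_ne n 0 with rfl | hn
  · exact ((condRange_nonempty_iff.2 hxv).mono hxS).eq_univ.trans
      ((condRange_nonempty_iff.2 hxv').mono hxS').eq_univ.symm
  rcases hdich with hD | hA
  · exact eq_of_disassociated hn hm1 hmn hprod hmnuniv hXY hXfin hδ0 hlarge hD.2.2.2 hFn hF
      hS hS' hxv hxv' hxS hxS' ht hxt hxt'
  · exact hFn.eq_of_subset hmn hS hS'
      (lt_mn_condRange hn hm1 hmn hprod hmnuniv hXY hXfin hδ0 hlarge hxv')
      ((condRange_subset_of_associated hn hm1 hmn hprod hmnuniv hsubn hXY hXfin hδ0 hlarge hA.2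
        hF hxv hxv' ht hxt hxt').trans hxS) hxS'

lemma mul_ncard_lt_m1_condRange (hm1 : IsUncertaintyFn m1)
    (hXfin : ∀ i, (Set.range fun ω => Xv ω i).Finite) (hδ0 : 0 ≤ δ)
    (hδ : δ < sInf {r | ∃ i : Fin n, ∃ x ∈ Set.range fun ω => Xv ω i,
        r = m1 (condRange (fun ω => Yv ω i) (fun ω => Xv ω i) x)} /
      ((Finset.univ.sup fun i : Fin n => (Set.range fun ω => Xv ω i).ncard : ℕ) : ℝ))
    {i : Fin n} {x : 𝒳} (hx : x ∈ Set.range fun ω => Xv ω i) :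
    δ * (Set.range fun ω => Xv ω i).ncard <
      m1 (condRange (fun ω => Yv ω i) (fun ω => Xv ω i) x) := by
  have hle : (Set.range fun ω => Xv ω i).ncard ≤
      Finset.univ.sup fun i : Fin n => (Set.range fun ω => Xv ω i).ncard :=
    Finset.le_sup (f := fun i : Fin n => (Set.range fun ω => Xv ω i).ncard) (Finset.mem_univ i)
  have hK : (0 : ℝ) < (Finset.univ.sup fun i : Fin n => (Set.range fun ω => Xv ω i).ncard : ℕ) := by
    exact_mod_cast ((Set.ncard_pos (hXfin i)).2 ⟨x, hx⟩).trans_le hle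
  calc δ * (Set.range fun ω => Xv ω i).ncard
      ≤ δ * (Finset.univ.sup fun i : Fin n => (Set.range fun ω => Xv ω i).ncard : ℕ) :=
        mul_le_mul_of_nonneg_left (by exact_mod_cast hle) hδ0
    _ < _ := (lt_div_iff₀ hK).1 hδ
    _ ≤ _ := csInf_le ⟨0, by rintro _ ⟨j, z, -, rfl⟩; exact hm1.nonneg _⟩ ⟨i, x, hx, rfl⟩

end Factorized

theorem information_subadditive_general
    {Ω 𝒳 𝒴 : Type*} {n : ℕ}
    (m1 : Set 𝒴 → ℝ) (mn : Set (Fin n → 𝒴) → ℝ) (mXn : Set (Fin n → 𝒳) → ℝ)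
    (hm1 : IsUncertaintyFn m1) (hmn : IsUncertaintyFn mn)
    (hprod : ∀ S : Fin n → Set 𝒴, mn (Set.univ.pi S) = ∏ i, m1 (S i))
    (hmnuniv : mn Set.univ = 1)
    (hsubn : ∀ S₁ S₂ : Set (Fin n → 𝒴), mn (S₁ ∪ S₂) ≤ mn S₁ + mn S₂)
    (Xv : Ω → Fin n → 𝒳) (Yv : Ω → Fin n → 𝒴) (δ : ℝ)
    (hX : Set.range Xv = Set.univ.pi fun i => Set.range fun ω => Xv ω i)
    (hY : ∀ xv ∈ Set.range Xv,
      condRange Yv Xv xv =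
        Set.univ.pi fun i =>
          condRange (fun ω => Yv ω i) (fun ω => Xv ω i) (xv i))
    (hXfin : ∀ i, (Set.range fun ω => Xv ω i).Finite)
    (hδ0 : 0 ≤ δ)
    (hδ : δ < sInf {r | ∃ i : Fin n, ∃ x ∈ Set.range fun ω => Xv ω i,
        r = m1 (condRange (fun ω => Yv ω i) (fun ω => Xv ω i) x)} /
      ((Finset.univ.sup fun i : Fin n =>
        (Set.range fun ω => Xv ω i).ncard : ℕ) : ℝ))
    (hdich : Disassociated mXn mn Xv Yv 0 (δ ^ n) ∨
      Associated mXn mn Xv Yv 1 (δ ^ n))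
    (Fn : Set (Set (Fin n → 𝒴))) (hFn : IsOverlapFamily mn Yv Xv (δ ^ n) Fn)
    (F : Fin n → Set (Set 𝒴))
    (hF : ∀ i, IsOverlapFamily m1 (fun ω => Yv ω i) (fun ω => Xv ω i) δ (F i))
    (hFfin : ∀ i, (F i).Finite) :
    Fn.ncard ≤ ∏ i, (F i).ncard ∧
    Real.logb 2 (Fn.ncard : ℝ) ≤ ∑ i, Real.logb 2 ((F i).ncard : ℝ) := by
  have hXY : IsFactorized Xv Yv := ⟨hX, hY⟩
  have hlarge := fun i x hx => mul_ncard_lt_m1_condRange (i := i) (x := x) hm1 hXfin hδ0 hδ hx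
  have hcard : Fn.ncard ≤ ∏ i, (F i).ncard := by
    rw [← Set.ncard_univ_pi]
    refine Set.ncard_le_ncard_of_forall_subsingleton (fun S t => ∃ xv ∈ Set.range Xv,
        condRange Yv Xv xv ⊆ S ∧ ∀ i, condRange (fun ω => Yv ω i) (fun ω => Xv ω i) (xv i) ⊆ t i)
      (fun S hS => ?_) ?_ (Set.Finite.pi hFfin)
    · obtain ⟨xv, hxv, hxS⟩ := (hFn.2.1 S hS).2
      choose t ht hxt using fun i => (hF i).2.2.2 (xv i) (hXY.apply_mem_range hxv i)
      exact ⟨t, fun i _ => ht i, xv, hxv, hxS, hxt⟩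
    · rintro t ht S ⟨hS, xv, hxv, hxS, hxt⟩ S' ⟨hS', xv', hxv', hxS', hxt'⟩
      exact eq_of_condRange_subset hm1 hmn hprod hmnuniv hsubn hXY hXfin hδ0 hlarge hdich hFn hF
        hS hS' hxv hxv' hxS hxS' (fun i => ht i trivial) hxt hxt'
  exact ⟨hcard, Real.logb_natCast_le_sum_of_le_prod one_lt_two _ hcard⟩

/-- Theorem 5: under the product and union-bound assumptions, with
`0 ≤ δ < (min_{i,x(i)} m_𝒴(⟦Y(i)|x(i)⟧)) / (maxᵢ |⟦X(i)⟧|)` and either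
disassociation at `(0, δⁿ)` or association at `(1, δⁿ)` of the joint variables,
the mutual information is subadditive:
`I_{δⁿ}(Y(1:n);X(1:n)) ≤ Σᵢ I_δ(Y(i);X(i))`, equivalently
`|⟦Y(1:n)|X(1:n)⟧*_{δⁿ}| ≤ ∏ᵢ |⟦Y(i)|X(i)⟧*_δ|`. -/
theorem information_subadditive
    {Ω 𝒳 𝒴 : Type*} {n : ℕ}
    (m1 : Set 𝒴 → ℝ) (mn : Set (Fin n → 𝒴) → ℝ) (mXn : Set (Fin n → 𝒳) → ℝ)
    (hm1 : IsUncertaintyFn m1) (hmn : IsUncertaintyFn mn)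
    (hmXn : IsUncertaintyFn mXn)
    (hprod : ∀ S : Fin n → Set 𝒴, mn (Set.univ.pi S) = ∏ i, m1 (S i))
    (hmnuniv : mn Set.univ = 1)
    (hsub1 : ∀ S₁ S₂ : Set 𝒴, m1 (S₁ ∪ S₂) ≤ m1 S₁ + m1 S₂)
    (hsubn : ∀ S₁ S₂ : Set (Fin n → 𝒴), mn (S₁ ∪ S₂) ≤ mn S₁ + mn S₂)
    (Xv : Ω → Fin n → 𝒳) (Yv : Ω → Fin n → 𝒴) (δ : ℝ)
    (hX : Set.range Xv = Set.univ.pi fun i => Set.range fun ω => Xv ω i)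
    (hY : ∀ xv ∈ Set.range Xv,
      condRange Yv Xv xv =
        Set.univ.pi fun i =>
          condRange (fun ω => Yv ω i) (fun ω => Xv ω i) (xv i))
    (hXfin : ∀ i, (Set.range fun ω => Xv ω i).Finite)
    (hδ0 : 0 ≤ δ)
    (hδ : δ < sInf {r | ∃ i : Fin n, ∃ x ∈ Set.range fun ω => Xv ω i,
        r = m1 (condRange (fun ω => Yv ω i) (fun ω => Xv ω i) x)} /
      ((Finset.univ.sup fun i : Fin n =>
        (Set.range fun ω => Xv ω i).ncard : ℕ) : ℝ))
    (hdich : Disassociated mXn mn Xv Yv 0 (δ ^ n) ∨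
      Associated mXn mn Xv Yv 1 (δ ^ n))
    (Fn : Set (Set (Fin n → 𝒴))) (hFn : IsOverlapFamily mn Yv Xv (δ ^ n) Fn)
    (hFnfin : Fn.Finite)
    (F : Fin n → Set (Set 𝒴))
    (hF : ∀ i, IsOverlapFamily m1 (fun ω => Yv ω i) (fun ω => Xv ω i) δ (F i))
    (hFfin : ∀ i, (F i).Finite) :
    Fn.ncard ≤ ∏ i, (F i).ncard ∧
    Real.logb 2 (Fn.ncard : ℝ) ≤ ∑ i, Real.logb 2 ((F i).ncard : ℝ) :=
  information_subadditive_general m1 mn mXn hm1 hmn hprod hmnuniv hsubn Xv Yv δ hX hY hXfin hδ0 hδ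
    hdich Fn hFn F hF hFfin

end NSIT
end

section
/- Let 𝒳 be a totally bounded normed metric space with all points of norm at most 1, and consider the ε-perturbation channel where transmitting x yields a point in S_ε(x) = {y : ‖x−y‖ ≤ ε}. With m_𝒴(𝒴)=1 and V_ε the minimal-uncertainty noise ball, for 0 < ε ≤ 1 and 0 ≤ δ < m_𝒴(V_ε), the (ε,δ)-capacity C_ε^δ = sup over (ε,δ)-distinguishable codebooks 𝒳 of log₂|𝒳| satisfies: for every uncertain variable X in the feasible set 𝓕_δ̃ with δ̃ ≤ δ/m_𝒴(⟦Y⟧) (i.e., either (X,Y) disassociated at (0, δ̃/|⟦X⟧|) or associated at (1, δ̃/|⟦X⟧|)), the mutual information I_{δ̃/|⟦X⟧|}(Y;X) ≤ C_ε^δ, and the supremum over all such X and δ̃ equals C_ε^δ. -/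
open Set Real

namespace NSIT

variable {Ω 𝒳 𝒴 : Type*}

universe u

variable {E : Type*} [NormedAddCommGroup E]

/-- A codebook `C` is `(ε,δ)`-distinguishable: the relative equivocation of every
pair of distinct codewords is at most `δ/|C|`. -/
def IsDistinguishable (mY : Set E → ℝ) (ε δ : ℝ) (C : Finset E) : Prop :=
  ∀ x₁ ∈ C, ∀ x₂ ∈ C, x₁ ≠ x₂ →
    mY (Metric.closedBall x₁ ε ∩ Metric.closedBall x₂ ε) / mY Set.univ ≤
      δ / (C.card : ℝ)

/-- The `(ε,δ)`-capacity: the supremum of `log₂ |C|` over `(ε,δ)`-distinguishable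
codebooks. -/
noncomputable def epsDeltaCapacity (mY : Set E → ℝ) (ε δ : ℝ) : ℝ :=
  sSup {r | ∃ C : Finset E, IsDistinguishable mY ε δ C ∧
    r = Real.logb 2 (C.card : ℝ)}

section AuxLemmas

theorem IsUncertaintyFn.nonneg_s16 {𝒳' : Type*} {m : Set 𝒳' → ℝ} (hm : IsUncertaintyFn m)
    (S : Set 𝒳') : 0 ≤ m S := by
  rcases S.eq_empty_or_nonempty with h | h
  · rw [h, hm.1]
  · exact (hm.2.1 S h).le

theorem IsUncertaintyFn.mono_s16 {𝒳' : Type*} {m : Set 𝒳' → ℝ} (hm : IsUncertaintyFn m)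
    {S T : Set 𝒳'} (h : S ⊆ T) : m S ≤ m T := by
  have h2 := hm.2.2 S T
  rw [Set.union_eq_self_of_subset_left h] at h2
  exact le_trans (le_max_left _ _) h2

theorem condRange_comp {Ω₁ Ω₂ 𝒳' 𝒴' : Type*} (e : Ω₁ ≃ Ω₂) (X : Ω₂ → 𝒳') (Y : Ω₂ → 𝒴')
    (y : 𝒴') : condRange (X ∘ e) (Y ∘ e) y = condRange X Y y := by
  ext x
  simp only [condRange, Set.mem_image, Set.mem_setOf_eq, Function.comp_apply]
  constructor
  · rintro ⟨ω, h1, rfl⟩; exact ⟨e ω, h1, rfl⟩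
  · rintro ⟨ω, h1, rfl⟩; exact ⟨e.symm ω, by simpa using h1, by simp⟩

/-- A totally bounded (pseudo)metric space is `Small` in any universe: one can
encode every point by a sequence of members of finite `1/(n+1)`-nets. -/
theorem small_of_totallyBounded_univ {α : Type*} [MetricSpace α]
    (htb : TotallyBounded (Set.univ : Set α)) : Small.{u} α := by
  classical
  have h' : ∀ n : ℕ, ∃ t : Set α, t.Finite ∧
      (Set.univ : Set α) ⊆ ⋃ y ∈ t, Metric.ball y (1 / (n + 1 : ℝ)) :=
    fun n => Metric.totallyBounded_iff.mp htb (1 / (n + 1 : ℝ)) (by positivity)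
  choose t htfin hcov using h'
  have hmem : ∀ (x : α) (n : ℕ), ∃ d : α, d ∈ t n ∧ dist x d < 1 / (n + 1 : ℝ) := by
    intro x n
    have hx := hcov n (Set.mem_univ x)
    simp only [Set.mem_iUnion, Metric.mem_ball, exists_prop] at hx
    exact hx
  choose f hf hfd using hmem
  haveI : ∀ n, Finite (t n) := fun n => (htfin n).to_subtype
  have hinj : Function.Injective (fun x : α => fun n : ℕ => (⟨f x n, hf x n⟩ : t n)) := by
    intro x y hxy
    by_contra hne
    have hd : 0 < dist x y := dist_pos.mpr hne
    obtain ⟨n, hn⟩ := exists_nat_one_div_lt (half_pos hd)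
    have hfe : f x n = f y n := congrArg Subtype.val (congrFun hxy n)
    have h1 : dist (f x n) y < 1 / (n + 1 : ℝ) := by
      rw [hfe, dist_comm]; exact hfd y n
    have h2 : dist x y ≤ dist x (f x n) + dist (f x n) y := dist_triangle _ _ _
    have h3 := hfd x n
    linarith
  exact small_of_injective hinj

end AuxLemmas

/-- Theorem 3, channel coding theorem for the `ε`-perturbation
channel: for every feasible uncertain variable `X` with `δ̃ ≤ δ/m_𝒴(⟦Y⟧)`, the
`δ̃/|⟦X⟧|`-mutual information between received and transmitted codewords is at
most `C_ε^δ`, and the supremum is attained, i.e. equals `C_ε^δ`. -/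
theorem channel_coding
    (hnorm : ∀ x : E, ‖x‖ ≤ 1) (htb : TotallyBounded (Set.univ : Set E))
    (mX mY : Set E → ℝ) (hmX : IsUncertaintyFn mX) (hmY : IsUncertaintyFn mY)
    (hYuniv : mY Set.univ = 1)
    (ε δ : ℝ) (hε0 : 0 < ε) (hε1 : ε ≤ 1) (hδ0 : 0 ≤ δ)
    (hδV : δ < sInf {r | ∃ x : E, r = mY (Metric.closedBall x ε)}) :
    (∀ (Ω : Type u) (X Y : Ω → E) (δt : ℝ) (F : Set (Set E)),
      (Set.range X).Finite →
      Set.range Y = ⋃ x ∈ Set.range X, Metric.closedBall x ε →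
      (∀ x ∈ Set.range X,
        condRange Y X x = {y ∈ Set.range Y | dist x y ≤ ε}) →
      (∀ y ∈ Set.range Y,
        condRange X Y y = {x ∈ Set.range X | dist x y ≤ ε}) →
      (Disassociated mX mY X Y 0 (δt / ((Set.range X).ncard : ℝ)) ∨
        Associated mX mY X Y 1 (δt / ((Set.range X).ncard : ℝ))) →
      δt ≤ δ / mY (Set.range Y) →
      IsOverlapFamily mY Y X (δt / ((Set.range X).ncard : ℝ)) F → F.Finite →
      Real.logb 2 (F.ncard : ℝ) ≤ epsDeltaCapacity mY ε δ) ∧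
    ∃ (Ω : Type u) (X Y : Ω → E) (δt : ℝ) (F : Set (Set E)),
      (Set.range X).Finite ∧
      Set.range Y = (⋃ x ∈ Set.range X, Metric.closedBall x ε) ∧
      (∀ x ∈ Set.range X,
        condRange Y X x = {y ∈ Set.range Y | dist x y ≤ ε}) ∧
      (∀ y ∈ Set.range Y,
        condRange X Y y = {x ∈ Set.range X | dist x y ≤ ε}) ∧
      (Disassociated mX mY X Y 0 (δt / ((Set.range X).ncard : ℝ)) ∨
        Associated mX mY X Y 1 (δt / ((Set.range X).ncard : ℝ))) ∧
      δt ≤ δ / mY (Set.range Y) ∧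
      IsOverlapFamily mY Y X (δt / ((Set.range X).ncard : ℝ)) F ∧ F.Finite ∧
      Real.logb 2 (F.ncard : ℝ) = epsDeltaCapacity mY ε δ := by
  classical
  -- every closed `ε`-ball has uncertainty greater than `δ`
  have hsInf : ∀ x : E, δ < mY (Metric.closedBall x ε) := by
    intro x
    refine lt_of_lt_of_le hδV (csInf_le ?_ ⟨x, rfl⟩)
    exact ⟨0, by rintro r ⟨x', rfl⟩; exact hmY.nonneg_s16 _⟩
  -- a uniform bound on the cardinality of distinguishable codebooks
  have hbound : ∃ N : ℕ, ∀ C : Finset E, IsDistinguishable mY ε δ C → C.card ≤ N := by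
    obtain ⟨t, htfin, hcov⟩ := Metric.totallyBounded_iff.mp htb (ε / 2) (by positivity)
    have hcv : ∀ x : E, ∃ c, c ∈ htfin.toFinset ∧ dist x c < ε / 2 := by
      intro x
      have hx := hcov (Set.mem_univ x)
      simp only [Set.mem_iUnion, Metric.mem_ball, exists_prop] at hx
      obtain ⟨c, hc1, hc2⟩ := hx
      exact ⟨c, htfin.mem_toFinset.mpr hc1, hc2⟩
    choose g hg1 hg2 using hcv
    have hTne : htfin.toFinset.Nonempty := ⟨g 0, hg1 0⟩
    set β := htfin.toFinset.inf' hTne (fun c => mY (Metric.closedBall c (ε / 2))) with hβ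
    have hβpos : 0 < β := by
      rw [hβ, Finset.lt_inf'_iff]
      intro c _
      exact hmY.2.1 _ ⟨c, Metric.mem_closedBall_self (by positivity)⟩
    refine ⟨max htfin.toFinset.card ⌈δ / β⌉₊ + 1, fun C hC => ?_⟩
    by_contra hlt
    push_neg at hlt
    have hTcard : htfin.toFinset.card < C.card := by
      have := le_max_left htfin.toFinset.card ⌈δ / β⌉₊
      omega
    obtain ⟨x₁, hx₁, x₂, hx₂, hne, heq⟩ :=
      Finset.exists_ne_map_eq_of_card_lt_of_maps_to hTcard (fun a _ => hg1 a)
    have hsub : Metric.closedBall (g x₁) (ε / 2) ⊆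
        Metric.closedBall x₁ ε ∩ Metric.closedBall x₂ ε := by
      intro y hy
      rw [Metric.mem_closedBall] at hy
      have hd1 : dist (g x₁) x₁ < ε / 2 := by rw [dist_comm]; exact hg2 x₁
      have hd2 : dist (g x₁) x₂ < ε / 2 := by rw [heq, dist_comm]; exact hg2 x₂
      constructor <;> rw [Metric.mem_closedBall]
      · calc dist y x₁ ≤ dist y (g x₁) + dist (g x₁) x₁ := dist_triangle _ _ _
          _ ≤ ε := by linarith
      · calc dist y x₂ ≤ dist y (g x₁) + dist (g x₁) x₂ := dist_triangle _ _ _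
          _ ≤ ε := by linarith
    have hkey := hC x₁ hx₁ x₂ hx₂ hne
    rw [hYuniv, div_one] at hkey
    have h5 : β ≤ δ / C.card :=
      le_trans (le_trans (Finset.inf'_le _ (hg1 x₁)) (hmY.mono_s16 hsub)) hkey
    have hCpos : (0 : ℝ) < C.card := by
      have : 1 ≤ C.card := by omega
      exact_mod_cast this
    have h6 : (C.card : ℝ) ≤ δ / β := by
      rw [le_div_iff₀ hβpos]
      rw [le_div_iff₀ hCpos] at h5
      linarith [h5]
    have h7 : C.card ≤ ⌈δ / β⌉₊ := by
      have := le_trans h6 (Nat.le_ceil (δ / β))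
      exact_mod_cast this
    omega
  obtain ⟨N, hNbound⟩ := hbound
  -- the set of achievable cardinalities and its maximum
  set A : Set ℕ := {n | ∃ C : Finset E, IsDistinguishable mY ε δ C ∧ C.card = n} with hA
  have hsingle : IsDistinguishable mY ε δ ({0} : Finset E) := by
    intro x₁ h₁ x₂ h₂ hne
    rw [Finset.mem_singleton] at h₁ h₂
    exact absurd (h₁.trans h₂.symm) hne
  have hA1 : 1 ∈ A := ⟨{0}, hsingle, Finset.card_singleton 0⟩
  have hAbdd : BddAbove A := ⟨N, by rintro n ⟨C, hC, rfl⟩; exact hNbound C hC⟩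
  set nstar := sSup A with hnstar
  have hnstar1 : 1 ≤ nstar := le_csSup hAbdd hA1
  have hmemA : nstar ∈ A := Nat.sSup_mem ⟨1, hA1⟩ hAbdd
  obtain ⟨Cstar, hCdist, hCcard⟩ := hmemA
  have hmax : ∀ C : Finset E, IsDistinguishable mY ε δ C → C.card ≤ nstar :=
    fun C hC => le_csSup hAbdd ⟨C, hC, rfl⟩
  have hnstarR : (1 : ℝ) ≤ (nstar : ℝ) := by exact_mod_cast hnstar1
  have hlogle : ∀ k : ℕ, k ≤ nstar → Real.logb 2 (k : ℝ) ≤ Real.logb 2 (nstar : ℝ) := by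
    intro k hk
    rcases Nat.eq_zero_or_pos k with h0 | hp
    · rw [h0, Nat.cast_zero, Real.logb_zero]
      exact Real.logb_nonneg one_lt_two hnstarR
    · exact Real.logb_le_logb_of_le one_lt_two (by exact_mod_cast hp) (by exact_mod_cast hk)
  have hgreat : IsGreatest {r | ∃ C : Finset E, IsDistinguishable mY ε δ C ∧
      r = Real.logb 2 (C.card : ℝ)} (Real.logb 2 (nstar : ℝ)) := by
    constructor
    · exact ⟨Cstar, hCdist, by rw [hCcard]⟩
    · rintro r ⟨C, hC, rfl⟩
      exact hlogle C.card (hmax C hC)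
  have hcap : epsDeltaCapacity mY ε δ = Real.logb 2 (nstar : ℝ) := by
    rw [epsDeltaCapacity]
    exact hgreat.csSup_eq
  constructor
  · -- PART 1: converse
    intro Ω' X Y δt F hXfin hYr hcondY hcondX hfeas hδt hF hFfin
    rcases Set.eq_empty_or_nonempty F with hFe | hFne
    · rw [hFe]
      simp only [Set.ncard_empty, Nat.cast_zero, Real.logb_zero]
      rw [hcap]
      exact Real.logb_nonneg one_lt_two hnstarR
    obtain ⟨hFU, hFmem, hFpair, hFcov⟩ := hF
    set n := (Set.range X).ncard with hn
    have hrep : ∀ S ∈ F, ∃ x, x ∈ Set.range X ∧ condRange Y X x ⊆ S := by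
      intro S hS
      obtain ⟨-, x, hx, hsub⟩ := hFmem S hS
      exact ⟨x, hx, hsub⟩
    choose! g hg1 hg2 using hrep
    obtain ⟨S₀, hS₀⟩ := hFne
    have hXne : (Set.range X).Nonempty := ⟨g S₀, hg1 S₀ hS₀⟩
    have hn1 : 1 ≤ n := (Set.ncard_pos hXfin).mpr hXne
    have hnR : (0 : ℝ) < (n : ℝ) := by exact_mod_cast hn1
    have hballY : ∀ x ∈ Set.range X, Metric.closedBall x ε ⊆ Set.range Y := by
      intro x hx
      rw [hYr]
      exact Set.subset_biUnion_of_mem (u := fun x => Metric.closedBall x ε) hx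
    have hYne : (Set.range Y).Nonempty :=
      ⟨g S₀, hballY _ (hg1 S₀ hS₀) (Metric.mem_closedBall_self hε0.le)⟩
    have hYpos : 0 < mY (Set.range Y) := hmY.2.1 _ hYne
    have hcond' : ∀ x ∈ Set.range X, condRange Y X x = Metric.closedBall x ε := by
      intro x hx
      rw [hcondY x hx]
      ext y
      simp only [Set.mem_setOf_eq, Metric.mem_closedBall]
      constructor
      · rintro ⟨-, hd⟩
        rwa [dist_comm]
      · intro hd
        exact ⟨hballY x hx (by rwa [Metric.mem_closedBall]), by rwa [dist_comm] at hd⟩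
    have hδtm : δt * mY (Set.range Y) ≤ δ := (le_div_iff₀ hYpos).mp hδt
    have hpairδ : ∀ S₁ ∈ F, ∀ S₂ ∈ F, S₁ ≠ S₂ → mY (S₁ ∩ S₂) ≤ δ / n := by
      intro S₁ h₁ S₂ h₂ hne
      refine le_trans (hFpair S₁ h₁ S₂ h₂ hne) ?_
      rw [div_mul_eq_mul_div]
      gcongr
    have hginj : Set.InjOn g F := by
      intro S₁ h₁ S₂ h₂ hgeq
      by_contra hne
      have hb1 : Metric.closedBall (g S₁) ε ⊆ S₁ ∩ S₂ := by
        apply Set.subset_inter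
        · rw [← hcond' _ (hg1 S₁ h₁)]
          exact hg2 S₁ h₁
        · rw [hgeq, ← hcond' _ (hg1 S₂ h₂)]
          exact hg2 S₂ h₂
      have h3 : mY (Metric.closedBall (g S₁) ε) ≤ δ / n :=
        le_trans (hmY.mono_s16 hb1) (hpairδ S₁ h₁ S₂ h₂ hne)
      have hδn : δ / n ≤ δ := div_le_self hδ0 (by exact_mod_cast hn1)
      linarith [hsInf (g S₁)]
    set C : Finset E := hFfin.toFinset.image g with hC
    have hmemC : ∀ x, x ∈ C ↔ ∃ S ∈ F, g S = x := by
      intro x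
      simp [hC, Finset.mem_image, Set.Finite.mem_toFinset]
    have hCcard' : C.card = F.ncard := by
      rw [hC, Finset.card_image_of_injOn (by rwa [Set.Finite.coe_toFinset]),
        ← Set.ncard_eq_toFinset_card F hFfin]
    have hCsub : ∀ x ∈ C, x ∈ Set.range X := by
      intro x hx
      obtain ⟨S, hS, rfl⟩ := (hmemC x).mp hx
      exact hg1 S hS
    have hCn : C.card ≤ n := by
      rw [hn]
      calc C.card = (C : Set E).ncard := (Set.ncard_coe_finset C).symm
        _ ≤ (Set.range X).ncard := Set.ncard_le_ncard (fun x hx => hCsub x hx) hXfin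
    have hCk1 : 1 ≤ C.card := by
      rw [hCcard']
      exact (Set.ncard_pos hFfin).mpr ⟨S₀, hS₀⟩
    have hCpos : (0 : ℝ) < (C.card : ℝ) := by exact_mod_cast hCk1
    have hCdist' : IsDistinguishable mY ε δ C := by
      intro x₁ hx₁ x₂ hx₂ hxne
      obtain ⟨S₁, hS₁, rfl⟩ := (hmemC x₁).mp hx₁
      obtain ⟨S₂, hS₂, rfl⟩ := (hmemC x₂).mp hx₂
      have hSne : S₁ ≠ S₂ := fun h => hxne (by rw [h])
      rw [hYuniv, div_one]
      have hIsub : Metric.closedBall (g S₁) ε ∩ Metric.closedBall (g S₂) ε ⊆ S₁ ∩ S₂ := by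
        apply Set.inter_subset_inter
        · rw [← hcond' _ (hg1 S₁ hS₁)]
          exact hg2 S₁ hS₁
        · rw [← hcond' _ (hg1 S₂ hS₂)]
          exact hg2 S₂ hS₂
      have hsmall : mY (Metric.closedBall (g S₁) ε ∩ Metric.closedBall (g S₂) ε) ≤ δ / n :=
        le_trans (hmY.mono_s16 hIsub) (hpairδ S₁ hS₁ S₂ hS₂ hSne)
      refine le_trans hsmall ?_
      exact div_le_div_of_nonneg_left hδ0 hCpos (by exact_mod_cast hCn)
    have hmemS : Real.logb 2 (F.ncard : ℝ) ∈ {r | ∃ C : Finset E,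
        IsDistinguishable mY ε δ C ∧ r = Real.logb 2 (C.card : ℝ)} :=
      ⟨C, hCdist', by rw [hCcard']⟩
    rw [hcap]
    exact hgreat.2 hmemS
  · -- PART 2: achievability
    haveI hsmallE : Small.{u} E := small_of_totallyBounded_univ htb
    have hCne : 0 < Cstar.card := by rw [hCcard]; exact hnstar1
    have hnR : (0 : ℝ) < (nstar : ℝ) := by exact_mod_cast hnstar1
    have hCd : ∀ x₁ ∈ Cstar, ∀ x₂ ∈ Cstar, x₁ ≠ x₂ →
        mY (Metric.closedBall x₁ ε ∩ Metric.closedBall x₂ ε) ≤ δ / nstar := by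
      intro x₁ h₁ x₂ h₂ hne
      have h := hCdist x₁ h₁ x₂ h₂ hne
      rwa [hYuniv, div_one, hCcard] at h
    have hδn : δ / nstar ≤ δ := div_le_self hδ0 hnstarR
    have hballinj : Set.InjOn (fun x => Metric.closedBall x ε) (Cstar : Set E) := by
      intro x₁ h₁ x₂ h₂ heq
      by_contra hne
      simp only [] at heq
      have h4 : Metric.closedBall x₁ ε ∩ Metric.closedBall x₂ ε = Metric.closedBall x₁ ε := by
        rw [← heq, Set.inter_self]
      have h3 := hCd x₁ h₁ x₂ h₂ hne
      rw [h4] at h3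
      linarith [hsInf x₁]
    -- the sample space
    set Ω₀ := {p : E × E // p.1 ∈ Cstar ∧ p.2 ∈ Metric.closedBall p.1 ε} with hΩ₀
    let e : Shrink.{u} Ω₀ ≃ Ω₀ := (equivShrink Ω₀).symm
    let X₀ : Ω₀ → E := fun p => p.val.1
    let Y₀ : Ω₀ → E := fun p => p.val.2
    set X : Shrink.{u} Ω₀ → E := X₀ ∘ e with hX
    set Y : Shrink.{u} Ω₀ → E := Y₀ ∘ e with hY
    have hrX : Set.range X = ↑Cstar := by
      rw [hX, e.surjective.range_comp X₀]
      ext x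
      constructor
      · rintro ⟨⟨⟨a, b⟩, ha, hb⟩, rfl⟩
        exact ha
      · intro hx
        exact ⟨⟨⟨x, x⟩, hx, Metric.mem_closedBall_self hε0.le⟩, rfl⟩
    have hrY : Set.range Y = ⋃ x ∈ Set.range X, Metric.closedBall x ε := by
      rw [hrX, hY, e.surjective.range_comp Y₀]
      ext y
      simp only [Set.mem_iUnion, exists_prop]
      constructor
      · rintro ⟨⟨⟨a, b⟩, ha, hb⟩, rfl⟩
        exact ⟨a, ha, hb⟩
      · rintro ⟨x, hx, hy⟩
        exact ⟨⟨⟨x, y⟩, hx, hy⟩, rfl⟩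
    have hcR : ∀ y, condRange X Y y = condRange X₀ Y₀ y := fun y => condRange_comp e X₀ Y₀ y
    have hcR' : ∀ x, condRange Y X x = condRange Y₀ X₀ x := fun x => condRange_comp e Y₀ X₀ x
    have hYXx : ∀ x ∈ Cstar, condRange Y₀ X₀ x = Metric.closedBall x ε := by
      intro x hx
      ext y
      simp only [condRange, Set.mem_image, Set.mem_setOf_eq]
      constructor
      · rintro ⟨⟨⟨a, b⟩, ha, hb⟩, h1, rfl⟩
        simp only [X₀, Y₀] at h1 ⊢
        rwa [← h1]
      · intro hy
        exact ⟨⟨⟨x, y⟩, hx, hy⟩, rfl, rfl⟩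
    have hXYy : ∀ y, condRange X₀ Y₀ y = {x | x ∈ Cstar ∧ y ∈ Metric.closedBall x ε} := by
      intro y
      ext x
      simp only [condRange, Set.mem_image, Set.mem_setOf_eq]
      constructor
      · rintro ⟨⟨⟨a, b⟩, ha, hb⟩, h1, rfl⟩
        simp only [X₀, Y₀] at h1 ⊢
        subst h1
        exact ⟨ha, hb⟩
      · rintro ⟨hx, hy⟩
        exact ⟨⟨⟨x, y⟩, hx, hy⟩, rfl, rfl⟩
    have hrXfin : (Set.range X).Finite := by
      rw [hrX]
      exact Cstar.finite_toSet
    have hrXn : ((Set.range X).ncard : ℝ) = (nstar : ℝ) := by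
      rw [hrX, Set.ncard_coe_finset, hCcard]
    have hYne : (Set.range Y).Nonempty := by
      obtain ⟨x, hx⟩ := Finset.card_pos.mp hCne
      rw [hrY, hrX]
      exact ⟨x, Set.mem_biUnion hx (Metric.mem_closedBall_self hε0.le)⟩
    have hYpos : 0 < mY (Set.range Y) := hmY.2.1 _ hYne
    set δt := δ / mY (Set.range Y) with hδtdef
    have hcondY : ∀ x ∈ Set.range X, condRange Y X x = {y ∈ Set.range Y | dist x y ≤ ε} := by
      intro x hx
      have hx' : x ∈ Cstar := by rwa [hrX] at hx
      rw [hcR', hYXx x hx']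
      ext y
      simp only [Set.mem_setOf_eq, Metric.mem_closedBall]
      constructor
      · intro hd
        refine ⟨?_, by rwa [dist_comm]⟩
        rw [hrY]
        exact Set.mem_biUnion hx (by rwa [Metric.mem_closedBall])
      · rintro ⟨-, hd⟩
        rwa [dist_comm]
    have hcondX : ∀ y ∈ Set.range Y, condRange X Y y = {x ∈ Set.range X | dist x y ≤ ε} := by
      intro y _
      rw [hcR, hXYy y]
      ext x
      simp only [Set.mem_setOf_eq, Metric.mem_closedBall, hrX]
      constructor
      · rintro ⟨hx, hd⟩
        exact ⟨hx, by rwa [dist_comm] at hd⟩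
      · rintro ⟨hx, hd⟩
        exact ⟨hx, by rwa [dist_comm]⟩
    have hδtn : δt / ((Set.range X).ncard : ℝ) * mY (Set.range Y) = δ / nstar := by
      rw [hrXn, hδtdef]
      field_simp
    have hassoc : Associated mX mY X Y 1 (δt / ((Set.range X).ncard : ℝ)) := by
      constructor
      · rintro r ⟨hr0, y₁, hy₁, y₂, hy₂, hne, rfl⟩
        have hXne : (Set.range X).Nonempty := by
          rw [hrX]
          obtain ⟨x, hx⟩ := Finset.card_pos.mp hCne
          exact ⟨x, hx⟩
        have hXpos : 0 < mX (Set.range X) := hmX.2.1 _ hXne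
        rw [div_le_one hXpos]
        exact hmX.mono_s16 (le_trans Set.inter_subset_left (Set.image_subset_range X _))
      · rintro r ⟨hr0, x₁, hx₁, x₂, hx₂, hne, rfl⟩
        have hx₁' : x₁ ∈ Cstar := by rwa [hrX] at hx₁
        have hx₂' : x₂ ∈ Cstar := by rwa [hrX] at hx₂
        rw [hcR', hcR', hYXx x₁ hx₁', hYXx x₂ hx₂']
        have h1 := hCd x₁ hx₁' x₂ hx₂' hne
        have hrw : δt / ((Set.range X).ncard : ℝ) = (δ / nstar) / mY (Set.range Y) := by
          rw [hrXn, hδtdef]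
          ring
        rw [hrw, div_eq_mul_inv, div_eq_mul_inv (δ / (nstar : ℝ))]
        exact mul_le_mul_of_nonneg_right h1 (inv_nonneg.mpr hYpos.le)
    set F : Set (Set E) := (fun x => Metric.closedBall x ε) '' ↑Cstar with hFdef
    have hoverlap : IsOverlapFamily mY Y X (δt / ((Set.range X).ncard : ℝ)) F := by
      refine ⟨?_, ?_, ?_, ?_⟩
      · rw [hrY, hrX, hFdef, Set.sUnion_image]
      · rintro S ⟨x, hx, rfl⟩
        have hx' : x ∈ Cstar := hx
        constructor
        · intro y₁ h₁ y₂ h₂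
          refine ⟨0, fun _ => x, ?_, ?_, fun i => i.elim0⟩
          · rw [hcR', hYXx x hx']
            exact h₁
          · rw [hcR', hYXx x hx']
            exact h₂
        · refine ⟨x, by rwa [hrX], ?_⟩
          rw [hcR', hYXx x hx']
      · rintro S₁ ⟨x₁, hx₁, rfl⟩ S₂ ⟨x₂, hx₂, rfl⟩ hne
        have hxne : x₁ ≠ x₂ := fun h => hne (by rw [h])
        rw [hδtn]
        exact hCd x₁ hx₁ x₂ hx₂ hxne
      · intro x hx
        have hx' : x ∈ Cstar := by rwa [hrX] at hx
        refine ⟨Metric.closedBall x ε, ⟨x, hx', rfl⟩, ?_⟩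
        rw [hcR', hYXx x hx']
    have hFfin : F.Finite := Cstar.finite_toSet.image _
    have hFcard : (F.ncard : ℝ) = (nstar : ℝ) := by
      rw [hFdef, Set.ncard_image_of_injOn hballinj, Set.ncard_coe_finset, hCcard]
    exact ⟨Shrink.{u} Ω₀, X, Y, δt, F, hrXfin, hrY, hcondY, hcondX, Or.inr hassoc,
      le_refl _, hoverlap, hFfin, by rw [hFcard, hcap]⟩

end NSIT
end
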